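/- arXiv:2310.01101 — 3 statements merged into one kernel-verified Lean document; each statement's English description precedes it below -/
import Mathlib

section
/- Let α₂, α₃, K > 0 and λ₁, λ₂ be real constants. Suppose q : ℝ → ℝ is twice continuously differentiable with q' bounded on [0,∞), and satisfies for all t ≥ 0: (α₂ + α₃ cos(q t)) · q''(t) − α₃ · (q'(t))² · sin(q t) = λ₁ and α₂ · q''(t) + K · q(t) = 0. Then λ₁ = 0. -/
/-! Along a solution, `(α₂ + α₃ cos q) q'` has derivative `λ₁` (the left side of the first equation
is exactly this derivative), so it grows like `λ₁ t`; since `q'` is bounded it stays bounded,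
which forces `λ₁ = 0`. -/

open Real

theorem abs_add_mul_cos_le (a b x : ℝ) : |a + b * cos x| ≤ |a| + |b| :=
  calc |a + b * cos x| ≤ |a| + |b| * |cos x| := by simpa only [abs_mul] using abs_add_le a (b * cos x)
    _ ≤ |a| + |b| := by gcongr; exact mul_le_of_le_one_right (abs_nonneg b) (abs_cos_le_one x)

theorem hasDerivAt_add_mul_cos_mul_deriv (a b : ℝ) {q : ℝ → ℝ} {t : ℝ}
    (hq : DifferentiableAt ℝ q t) (hq' : DifferentiableAt ℝ (deriv q) t) :
    HasDerivAt (fun s => (a + b * cos (q s)) * deriv q s)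
      ((a + b * cos (q t)) * deriv (deriv q) t - b * deriv q t ^ 2 * sin (q t)) t := by
  have hcos := (hq.hasDerivAt.cos.const_mul b).const_add a
  exact (hcos.mul hq'.hasDerivAt).congr_deriv (by ring)

theorem eq_zero_of_forall_abs_mul_le {c M : ℝ} (h : ∀ t ≥ (0 : ℝ), |c * t| ≤ M) : c = 0 := by
  by_contra hc
  have hM : 0 ≤ M := (abs_nonneg _).trans (h 0 le_rfl)
  have hct := h ((M + 1) / |c|) (by positivity)
  rw [abs_mul, abs_of_nonneg (by positivity : 0 ≤ (M + 1) / |c|),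
    mul_div_cancel₀ _ (abs_pos.mpr hc).ne'] at hct
  linarith

theorem eq_zero_of_hasDerivAt_const_of_bounded {F : ℝ → ℝ} {c M : ℝ}
    (hF : ∀ t ≥ (0 : ℝ), HasDerivAt F c t) (hb : ∀ t ≥ (0 : ℝ), |F t| ≤ M) : c = 0 := by
  have hlin : ∀ t ≥ (0 : ℝ), F t - F 0 = c * t := by
    intro t ht
    have hG : ∀ s ≥ (0 : ℝ), HasDerivAt (fun s => F s - c * s) 0 s := fun s hs => by
      have h := (hF s hs).sub ((hasDerivAt_id' s).const_mul c)
      rwa [mul_one, sub_self] at h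
    have hconst := constant_of_has_deriv_right_zero (a := 0) (b := t)
      (fun s hs => (hG s hs.1).continuousAt.continuousWithinAt)
      (fun s hs => (hG s hs.1).hasDerivWithinAt) t ⟨ht, le_rfl⟩
    simp only [mul_zero, sub_zero] at hconst
    linarith
  refine eq_zero_of_forall_abs_mul_le (M := 2 * M) fun t ht => ?_
  calc |c * t| = |F t - F 0| := by rw [hlin t ht]
    _ ≤ |F t| + |F 0| := abs_sub _ _
    _ ≤ 2 * M := by linarith [hb t ht, hb 0 le_rfl]

theorem stmt_0_general (α₂ α₃ lam₁ : ℝ)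
    (q : ℝ → ℝ) (hq : ContDiff ℝ 2 q)
    (C : ℝ) (hbdd : ∀ t ≥ (0 : ℝ), |deriv q t| ≤ C)
    (h1 : ∀ t ≥ (0 : ℝ),
      (α₂ + α₃ * Real.cos (q t)) * deriv (deriv q) t
        - α₃ * (deriv q t) ^ 2 * Real.sin (q t) = lam₁) :
    lam₁ = 0 := by
  have hq₁ : Differentiable ℝ q := hq.differentiable (by norm_num)
  have hq₂ : Differentiable ℝ (deriv q) :=
    ((contDiff_succ_iff_deriv (n := 1)).mp hq).2.2.differentiable one_ne_zero
  refine eq_zero_of_hasDerivAt_const_of_bounded (F := fun t => (α₂ + α₃ * cos (q t)) * deriv q t)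
    (M := (|α₂| + |α₃|) * C) (fun t ht => ?_) (fun t ht => ?_)
  · rw [← h1 t ht]
    exact hasDerivAt_add_mul_cos_mul_deriv α₂ α₃ (hq₁ t) (hq₂ t)
  · rw [abs_mul]
    exact mul_le_mul (abs_add_mul_cos_le α₂ α₃ (q t)) (hbdd t ht) (abs_nonneg _) (by positivity)

theorem stmt_0 (α₂ α₃ K lam₁ lam₂ : ℝ) (hα₂ : 0 < α₂) (hα₃ : 0 < α₃) (hK : 0 < K)
    (q : ℝ → ℝ) (hq : ContDiff ℝ 2 q)
    (C : ℝ) (hbdd : ∀ t ≥ (0 : ℝ), |deriv q t| ≤ C)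
    (h1 : ∀ t ≥ (0 : ℝ),
      (α₂ + α₃ * Real.cos (q t)) * deriv (deriv q) t
        - α₃ * (deriv q t) ^ 2 * Real.sin (q t) = lam₁)
    (h2 : ∀ t ≥ (0 : ℝ), α₂ * deriv (deriv q) t + K * q t = 0) :
    lam₁ = 0 :=
  stmt_0_general α₂ α₃ lam₁ q hq C hbdd h1
end

section
/- Let α₁, α₂, α₃, K₁, K₂ > 0 with α₂ ≠ α₃, and let q₂*, u₂* be real constants. Set M₁₁ = α₁ + α₂ + 2α₃ cos(q₂*) and M₂₁ = α₂ + α₃ cos(q₂*), and assume M₁₁ > 0. Suppose q₁ : ℝ → ℝ is twice continuously differentiable and for all t ≥ 0: M₁₁ · q₁''(t) + K₁ · q₁(t) = 0 and M₂₁ · q₁''(t) + α₃ · (q₁'(t))² · sin(q₂*) = u₂* − K₂ · q₂*. Then q₁(t) = 0 for all t ≥ 0. -/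
/-!
Along any solution the energy `M₁₁ q₁'² + K₁ q₁²` of the first equation is conserved.
Eliminating `q₁''` and `q₁'²` from the second equation with it shows that
`α₃ sin q₂* · q₁² + M₂₁ · q₁` is constant on `[0, ∞)`. Since `α₂, α₃ > 0` and `α₂ ≠ α₃`, this
quadratic is not the zero polynomial, so its fibres are finite and the continuous function `q₁`
must be constant on the connected set `[0, ∞)`. Then `q₁'' = 0` there, and the first equation
forces `q₁ = 0`.
-/

open Real Set Filter Topology Polynomial

section

variable {S : Set ℝ} {x y : ℝ}

theorem Convex.apply_eq_of_hasDerivAt_zero {g : ℝ → ℝ} (hS : Convex ℝ S)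
    (hg : ∀ t ∈ S, HasDerivAt g 0 t) (hx : x ∈ S) (hy : y ∈ S) : g x = g y := by
  have h := norm_image_sub_le_of_norm_hasDerivWithin_le (C := 0)
    (fun t ht => (hg t ht).hasDerivWithinAt) (fun _ _ => norm_zero.le) hS hy hx
  rwa [zero_mul, norm_le_zero_iff, sub_eq_zero] at h

variable {f : ℝ → ℝ} {a b : ℝ}

theorem oscillator_energy_eq (hf : ContDiff ℝ 2 f) (hS : Convex ℝ S)
    (hosc : ∀ t ∈ S, a * deriv (deriv f) t + b * f t = 0) (hx : x ∈ S) (hy : y ∈ S) :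
    a * deriv f x ^ 2 + b * f x ^ 2 = a * deriv f y ^ 2 + b * f y ^ 2 := by
  have hf' : Differentiable ℝ (deriv f) :=
    ((contDiff_succ_iff_deriv (n := 1)).mp hf).2.2.differentiable one_ne_zero
  refine hS.apply_eq_of_hasDerivAt_zero (g := fun t => a * deriv f t ^ 2 + b * f t ^ 2)
    (fun t ht => ?_) hx hy
  refine ((((hf' t).hasDerivAt.fun_pow 2).const_mul a).add
    (((hf.differentiable two_ne_zero t).hasDerivAt.fun_pow 2).const_mul b)).congr_deriv ?_
  linear_combination (2 * deriv f t) * hosc t ht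

theorem first_integral_eq {m s c : ℝ} (hf : ContDiff ℝ 2 f) (hS : Convex ℝ S)
    (hosc : ∀ t ∈ S, a * deriv (deriv f) t + b * f t = 0)
    (hforce : ∀ t ∈ S, m * deriv (deriv f) t + s * deriv f t ^ 2 = c) (hb : b ≠ 0)
    (hx : x ∈ S) (hy : y ∈ S) :
    s * f x ^ 2 + m * f x = s * f y ^ 2 + m * f y := by
  refine mul_left_cancel₀ hb ?_
  linear_combination (-a) * hforce x hx + a * hforce y hy + m * hosc x hx - m * hosc y hy +
    s * oscillator_energy_eq hf hS hosc hx hy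

end

theorem IsPreconnected.apply_eq_of_finite_fibres {α β γ : Type*} [TopologicalSpace α]
    [TopologicalSpace β] [T1Space β] {S : Set α} {f : α → β} {g : β → γ}
    (hS : IsPreconnected S) (hg : ∀ c, (g ⁻¹' {c}).Finite) (hf : ContinuousOn f S)
    (hgf : ∀ x ∈ S, ∀ y ∈ S, g (f x) = g (f y)) {x y : α} (hx : x ∈ S) (hy : y ∈ S) :
    f x = f y :=
  hS.constant_of_mapsTo (hg (g (f y))).isDiscrete hf (fun z hz => hgf z hz y hy) hx hy

theorem finite_setOf_quadratic_eq {R : Type*} [CommRing R] [IsDomain R] {s m : R}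
    (hsm : s ≠ 0 ∨ m ≠ 0) (c : R) : {x : R | s * x ^ 2 + m * x = c}.Finite := by
  have hp : C s * X ^ 2 + C m * X - C c ≠ 0 := by
    intro hp
    have hs : s = 0 := by simpa [coeff_C] using congrArg (coeff · 2) hp
    have hm : m = 0 := by simpa [coeff_C] using congrArg (coeff · 1) hp
    exact hsm.elim (· hs) (· hm)
  convert finite_setOfPred_isRoot hp using 2
  simp [sub_eq_zero]

theorem add_mul_cos_ne_zero_of_sin_eq_zero {α₂ α₃ θ : ℝ} (hα₂ : 0 < α₂) (hα₃ : 0 < α₃)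
    (hne : α₂ ≠ α₃) (hθ : sin θ = 0) : α₂ + α₃ * cos θ ≠ 0 := by
  rcases sin_eq_zero_iff_cos_eq.mp hθ with h | h <;> rw [h]
  · positivity
  · intro h'
    exact hne (by linarith)

theorem deriv_deriv_eq_zero_of_eventuallyEq_const {f : ℝ → ℝ} {t c : ℝ}
    (h : f =ᶠ[𝓝 t] fun _ => c) : deriv (deriv f) t = 0 := by
  rw [h.deriv.deriv_eq]
  simp

theorem stmt_3_general (α₂ α₃ K₁ K₂ : ℝ) (hα₂ : 0 < α₂) (hα₃ : 0 < α₃)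
    (hK₁ : 0 < K₁) (hne : α₂ ≠ α₃) (q₂star u₂star : ℝ)
    (M₁₁ M₂₁ : ℝ)
    (hM21 : M₂₁ = α₂ + α₃ * Real.cos q₂star)
    (q₁ : ℝ → ℝ) (hq : ContDiff ℝ 2 q₁)
    (h1 : ∀ t ≥ (0 : ℝ), M₁₁ * deriv (deriv q₁) t + K₁ * q₁ t = 0)
    (h2 : ∀ t ≥ (0 : ℝ),
      M₂₁ * deriv (deriv q₁) t + α₃ * (deriv q₁ t) ^ 2 * Real.sin q₂star
        = u₂star - K₂ * q₂star) :
    ∀ t ≥ (0 : ℝ), q₁ t = 0 := by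
  have hcoef : α₃ * sin q₂star ≠ 0 ∨ M₂₁ ≠ 0 := by
    by_cases hsin : sin q₂star = 0
    · exact .inr (hM21 ▸ add_mul_cos_ne_zero_of_sin_eq_zero hα₂ hα₃ hne hsin)
    · exact .inl (mul_ne_zero hα₃.ne' hsin)
  have hforce : ∀ t ∈ Ici (0 : ℝ),
      M₂₁ * deriv (deriv q₁) t + α₃ * sin q₂star * deriv q₁ t ^ 2 = u₂star - K₂ * q₂star :=
    fun t ht => by rw [← h2 t ht]; ring
  have hconst : ∀ x ∈ Ici (0 : ℝ), ∀ y ∈ Ici (0 : ℝ), q₁ x = q₁ y :=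
    fun x hx y hy => isPreconnected_Ici.apply_eq_of_finite_fibres
      (finite_setOf_quadratic_eq hcoef) hq.continuous.continuousOn
      (fun _ hu _ hv => first_integral_eq hq (convex_Ici 0) h1 hforce hK₁.ne' hu hv) hx hy
  have hone : (1 : ℝ) ∈ Ici 0 := mem_Ici.mpr zero_le_one
  have hq1 : q₁ 1 = 0 := by
    have hev : q₁ =ᶠ[𝓝 1] fun _ => q₁ 1 :=
      eventually_of_mem (Ioi_mem_nhds zero_lt_one) fun y hy =>
        hconst y (Ioi_subset_Ici_self hy) 1 hone
    have h := h1 1 hone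
    rw [deriv_deriv_eq_zero_of_eventuallyEq_const hev, mul_zero, zero_add] at h
    exact (mul_eq_zero.mp h).resolve_left hK₁.ne'
  intro t ht
  rw [hconst t ht 1 hone, hq1]

theorem stmt_3 (α₁ α₂ α₃ K₁ K₂ : ℝ) (hα₁ : 0 < α₁) (hα₂ : 0 < α₂) (hα₃ : 0 < α₃)
    (hK₁ : 0 < K₁) (hK₂ : 0 < K₂) (hne : α₂ ≠ α₃) (q₂star u₂star : ℝ)
    (M₁₁ M₂₁ : ℝ)
    (hM11 : M₁₁ = α₁ + α₂ + 2 * α₃ * Real.cos q₂star)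
    (hM21 : M₂₁ = α₂ + α₃ * Real.cos q₂star)
    (hM11pos : 0 < M₁₁)
    (q₁ : ℝ → ℝ) (hq : ContDiff ℝ 2 q₁)
    (h1 : ∀ t ≥ (0 : ℝ), M₁₁ * deriv (deriv q₁) t + K₁ * q₁ t = 0)
    (h2 : ∀ t ≥ (0 : ℝ),
      M₂₁ * deriv (deriv q₁) t + α₃ * (deriv q₁ t) ^ 2 * Real.sin q₂star
        = u₂star - K₂ * q₂star) :
    ∀ t ≥ (0 : ℝ), q₁ t = 0 :=
  stmt_3_general α₂ α₃ K₁ K₂ hα₂ hα₃ hK₁ hne q₂star u₂star M₁₁ M₂₁ hM21 q₁ hq h1 h2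
end

section
/- Let M : ℝ → Matrix (Fin n) (Fin n) ℝ be a differentiable symmetric-matrix-valued function along a trajectory, K a symmetric positive semidefinite constant matrix, and q : ℝ → ℝⁿ twice differentiable satisfying M(t)·q''(t) = u(t) − C(t)·q'(t) − K·q(t) where Ṁ(t) − 2C(t) is skew-symmetric for all t. Define U(t) = ½ q'(t)ᵀ M(t) q'(t) + ½ q(t)ᵀ K q(t). Then U'(t) = q'(t)ᵀ u(t) for all t. -/
/-!
Differentiating the energy with the product rule, the symmetry of `M t` and `K` gives
`U' = ½ q'ᵀ Ṁ q' + q'ᵀ M q'' + qᵀ K q'`. Substituting the equation of motion for `M q''`, the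
spring terms cancel, and the remaining `½ q'ᵀ Ṁ q' - q'ᵀ C q'` is half the quadratic form of the
skew-symmetric matrix `Ṁ - 2C`, hence zero.
-/

open Matrix

theorem hasDerivAt_dotProduct_mulVec {𝕜 : Type*} [NontriviallyNormedField 𝕜]
    {m n : Type*} [Fintype m] [Fintype n]
    {A : 𝕜 → Matrix m n 𝕜} {v : 𝕜 → m → 𝕜} {w : 𝕜 → n → 𝕜}
    {A' : Matrix m n 𝕜} {v' : m → 𝕜} {w' : n → 𝕜} {t : 𝕜}
    (hA : ∀ i j, HasDerivAt (fun s => A s i j) (A' i j) t)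
    (hv : ∀ i, HasDerivAt (fun s => v s i) (v' i) t)
    (hw : ∀ j, HasDerivAt (fun s => w s j) (w' j) t) :
    HasDerivAt (fun s => v s ⬝ᵥ A s *ᵥ w s)
      (v' ⬝ᵥ A t *ᵥ w t + v t ⬝ᵥ A' *ᵥ w t + v t ⬝ᵥ A t *ᵥ w') t := by
  simp only [dotProduct, mulVec, Finset.mul_sum]
  refine (HasDerivAt.fun_sum fun i _ => HasDerivAt.fun_sum fun j _ =>
    (hv i).mul ((hA i j).mul (hw j))).congr_deriv ?_
  simp only [Pi.mul_apply, ← Finset.sum_add_distrib]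
  exact Finset.sum_congr rfl fun i _ => Finset.sum_congr rfl fun j _ => by ring

theorem Matrix.IsSymm.dotProduct_mulVec_comm {R n : Type*} [CommSemiring R] [Fintype n]
    {A : Matrix n n R} (hA : A.IsSymm) (x y : n → R) : x ⬝ᵥ A *ᵥ y = y ⬝ᵥ A *ᵥ x := by
  rw [dotProduct_mulVec, ← mulVec_transpose, hA.eq, dotProduct_comm]

theorem dotProduct_mulVec_self_eq_zero_of_transpose_eq_neg {R n : Type*} [CommRing R]
    [NoZeroDivisors R] [CharZero R] [Fintype n] {A : Matrix n n R} (hA : Aᵀ = -A)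
    (x : n → R) : x ⬝ᵥ A *ᵥ x = 0 := by
  rw [← self_eq_neg]
  conv_lhs => rw [dotProduct_mulVec, ← mulVec_transpose, hA, neg_mulVec, neg_dotProduct,
    dotProduct_comm]

theorem hasDerivAt_dotProduct_mulVec_self_of_isSymm {𝕜 : Type*} [NontriviallyNormedField 𝕜]
    {n : Type*} [Fintype n] {A : 𝕜 → Matrix n n 𝕜} {v : 𝕜 → n → 𝕜}
    {A' : Matrix n n 𝕜} {v' : n → 𝕜} {t : 𝕜} (hsymm : (A t).IsSymm)
    (hA : ∀ i j, HasDerivAt (fun s => A s i j) (A' i j) t)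
    (hv : ∀ i, HasDerivAt (fun s => v s i) (v' i) t) :
    HasDerivAt (fun s => v s ⬝ᵥ A s *ᵥ v s) (v t ⬝ᵥ A' *ᵥ v t + 2 * (v t ⬝ᵥ A t *ᵥ v')) t := by
  refine (hasDerivAt_dotProduct_mulVec hA hv hv).congr_deriv ?_
  rw [hsymm.dotProduct_mulVec_comm v']
  ring

theorem stmt_13_general (n : ℕ)
    (M : ℝ → Matrix (Fin n) (Fin n) ℝ) (M' : ℝ → Matrix (Fin n) (Fin n) ℝ)
    (hMsymm : ∀ t, (M t).IsSymm)
    (hM' : ∀ t i j, HasDerivAt (fun s => M s i j) (M' t i j) t)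
    (K : Matrix (Fin n) (Fin n) ℝ) (hKsymm : K.IsSymm)
    (q q' q'' u : ℝ → Fin n → ℝ) (C : ℝ → Matrix (Fin n) (Fin n) ℝ)
    (hq' : ∀ t i, HasDerivAt (fun s => q s i) (q' t i) t)
    (hq'' : ∀ t i, HasDerivAt (fun s => q' s i) (q'' t i) t)
    (heq : ∀ t, (M t) *ᵥ q'' t = u t - (C t) *ᵥ q' t - K *ᵥ q t)
    (hskew : ∀ t, (M' t - 2 • C t)ᵀ = -(M' t - 2 • C t))
    (U : ℝ → ℝ)
    (hU : U = fun t => (1 / 2) * (q' t ⬝ᵥ (M t) *ᵥ q' t)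
      + (1 / 2) * (q t ⬝ᵥ K *ᵥ q t)) :
    ∀ t, HasDerivAt U (q' t ⬝ᵥ u t) t := by
  intro t
  have hkinetic := hasDerivAt_dotProduct_mulVec_self_of_isSymm (hMsymm t) (hM' t) (hq'' t)
  have hpotential := hasDerivAt_dotProduct_mulVec_self_of_isSymm (A := fun _ => K) (A' := 0)
    hKsymm (fun i j => hasDerivAt_const t (K i j)) (hq' t)
  have hcoriolis : q' t ⬝ᵥ M' t *ᵥ q' t = 2 * (q' t ⬝ᵥ C t *ᵥ q' t) := by
    have hzero := dotProduct_mulVec_self_eq_zero_of_transpose_eq_neg (hskew t) (q' t)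
    rw [sub_mulVec, dotProduct_sub, smul_mulVec, dotProduct_smul, nsmul_eq_mul,
      Nat.cast_ofNat] at hzero
    linarith
  have hmotion : q' t ⬝ᵥ M t *ᵥ q'' t
      = q' t ⬝ᵥ u t - q' t ⬝ᵥ C t *ᵥ q' t - q t ⬝ᵥ K *ᵥ q' t := by
    rw [heq t, dotProduct_sub, dotProduct_sub, hKsymm.dotProduct_mulVec_comm (q' t)]
  rw [hU]
  refine ((hkinetic.const_mul (1 / 2)).add (hpotential.const_mul (1 / 2))).congr_deriv ?_
  rw [hcoriolis, hmotion, zero_mulVec, dotProduct_zero]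
  ring

theorem stmt_13 (n : ℕ)
    (M : ℝ → Matrix (Fin n) (Fin n) ℝ) (M' : ℝ → Matrix (Fin n) (Fin n) ℝ)
    (hMsymm : ∀ t, (M t).IsSymm)
    (hM' : ∀ t i j, HasDerivAt (fun s => M s i j) (M' t i j) t)
    (K : Matrix (Fin n) (Fin n) ℝ) (hKsymm : K.IsSymm) (hKpsd : K.PosSemidef)
    (q q' q'' u : ℝ → Fin n → ℝ) (C : ℝ → Matrix (Fin n) (Fin n) ℝ)
    (hq' : ∀ t i, HasDerivAt (fun s => q s i) (q' t i) t)
    (hq'' : ∀ t i, HasDerivAt (fun s => q' s i) (q'' t i) t)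
    (heq : ∀ t, (M t) *ᵥ q'' t = u t - (C t) *ᵥ q' t - K *ᵥ q t)
    (hskew : ∀ t, (M' t - 2 • C t)ᵀ = -(M' t - 2 • C t))
    (U : ℝ → ℝ)
    (hU : U = fun t => (1 / 2) * (q' t ⬝ᵥ (M t) *ᵥ q' t)
      + (1 / 2) * (q t ⬝ᵥ K *ᵥ q t)) :
    ∀ t, HasDerivAt U (q' t ⬝ᵥ u t) t :=
  stmt_13_general n M M' hMsymm hM' K hKsymm q q' q'' u C hq' hq'' heq hskew U hU
end
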